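/- (Relative entropy bound for perturbed states, first direction.) Let D be a positive definite density matrix on ℂ^n, let h be a Hermitian n×n matrix, and define the perturbed density matrix D^h = e^{log D + h}/Tr(e^{log D + h}). Then S(D^h | D) ≤ Tr(D^h h) − Tr(D h) ≤ 2‖h‖, where ‖·‖ is the operator norm. -/

import Mathlib

open scoped Kronecker ComplexOrder
open Matrix

noncomputable section

namespace TAL

/-- A density matrix: positive semidefinite with trace `1`. -/
def IsDensityMatrix {k : Type*} [Fintype k] [DecidableEq k] (D : Matrix k k ℂ) : Prop :=
  D.PosSemidef ∧ D.trace = 1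

/-- Functional calculus for Hermitian matrices via the spectral decomposition
(junk value `0` on non-Hermitian matrices). -/
def hermCalc {k : Type*} [Fintype k] [DecidableEq k] (f : ℝ → ℝ) (A : Matrix k k ℂ) :
    Matrix k k ℂ :=
  if hA : A.IsHermitian then
    (hA.eigenvectorUnitary : Matrix k k ℂ) *
      Matrix.diagonal (fun i => (f (hA.eigenvalues i) : ℂ)) *
        star (hA.eigenvectorUnitary : Matrix k k ℂ)
  else 0

/-- Matrix logarithm via the spectral decomposition. -/
def matLog {k : Type*} [Fintype k] [DecidableEq k] (A : Matrix k k ℂ) : Matrix k k ℂ :=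
  hermCalc Real.log A

/-- The von Neumann entropy `S(D) = -Tr (D log D)`, computed through the eigenvalues,
with the convention `0 * log 0 = 0` (junk value `0` on non-Hermitian matrices). -/
def vnEntropy {k : Type*} [Fintype k] [DecidableEq k] (A : Matrix k k ℂ) : ℝ :=
  if hA : A.IsHermitian then ∑ i, Real.negMulLog (hA.eigenvalues i) else 0

/-- The Umegaki relative entropy `S(D | E) = Tr (D (log D - log E))`. -/
def relEntropy {k : Type*} [Fintype k] [DecidableEq k] (D E : Matrix k k ℂ) : ℝ :=
  ((D * (matLog D - matLog E)).trace).re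

/-- Partial trace over the second (right) tensor factor. -/
def ptraceR {k₁ k₂ : Type*} [Fintype k₂] (D : Matrix (k₁ × k₂) (k₁ × k₂) ℂ) :
    Matrix k₁ k₁ ℂ :=
  Matrix.of fun i j => ∑ s : k₂, D (i, s) (j, s)

/-- Partial trace over the first (left) tensor factor. -/
def ptraceL {k₁ k₂ : Type*} [Fintype k₁] (D : Matrix (k₁ × k₂) (k₁ × k₂) ℂ) :
    Matrix k₂ k₂ ℂ :=
  Matrix.of fun i j => ∑ s : k₁, D (s, i) (s, j)

/-- The mutual entropy `I_D(A:B) = S(D_A) + S(D_B) - S(D)`. -/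
def mutualEntropy {k₁ k₂ : Type*} [Fintype k₁] [Fintype k₂] [DecidableEq k₁] [DecidableEq k₂]
    (D : Matrix (k₁ × k₂) (k₁ × k₂) ℂ) : ℝ :=
  vnEntropy (ptraceR D) + vnEntropy (ptraceL D) - vnEntropy D

/-- The Gibbs density matrix `e^{-β H} / Tr(e^{-β H})`. -/
def gibbs {k : Type*} [Fintype k] [DecidableEq k] (β : ℝ) (H : Matrix k k ℂ) :
    Matrix k k ℂ :=
  (NormedSpace.exp ((-(β : ℂ)) • H)).trace⁻¹ • NormedSpace.exp ((-(β : ℂ)) • H)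

/-- The free energy functional `F(D) = Tr(H D) - β⁻¹ S(D)` (real part of the trace). -/
def freeEnergy {k : Type*} [Fintype k] [DecidableEq k] (β : ℝ) (H D : Matrix k k ℂ) : ℝ :=
  ((H * D).trace).re - β⁻¹ * vnEntropy D

/-- The ℓ²-operator norm of a matrix. -/
def opNorm {k : Type*} [Fintype k] [DecidableEq k] (A : Matrix k k ℂ) : ℝ :=
  ‖(Matrix.toEuclideanCLM (𝕜 := ℂ) A : EuclideanSpace ℂ k →L[ℂ] EuclideanSpace ℂ k)‖

/-- The trace norm `‖X‖₁ = Tr ((X* X)^{1/2})`. -/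
def traceNorm {k : Type*} [Fintype k] [DecidableEq k] (X : Matrix k k ℂ) : ℝ :=
  (((Matrix.posSemidef_conjTranspose_mul_self X).isHermitian.eigenvectorUnitary : Matrix k k ℂ) *
    Matrix.diagonal (((↑) : ℝ → ℂ) ∘ Real.sqrt ∘
      (Matrix.posSemidef_conjTranspose_mul_self X).isHermitian.eigenvalues) *
    (star (Matrix.posSemidef_conjTranspose_mul_self X).isHermitian.eigenvectorUnitary :
      Matrix k k ℂ)).trace.re


/-- The perturbed density matrix `D^h = e^{log D + h} / Tr(e^{log D + h})`. -/
def pert {k : Type*} [Fintype k] [DecidableEq k] (D h : Matrix k k ℂ) : Matrix k k ℂ :=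
  (NormedSpace.exp (matLog D + h)).trace⁻¹ • NormedSpace.exp (matLog D + h)

/-!
Put `A = log D + h` and `Z = Tr e^A`. Since `D^h = e^A / Z` we have `log D^h = A - log Z`, hence
`S(D^h | D) = Tr(D^h h) - log Z` and `S(D | D^h) = log Z - Tr(D h)`; Klein's inequality
`S(D | D^h) ≥ 0` is therefore exactly the first bound.

For a density matrix `ρ = Σ pᵢ uᵢuᵢ*` and a Hermitian `σ = Σ qⱼ vⱼvⱼ*`, the overlaps
`|⟨uᵢ, vⱼ⟩|²` form a doubly stochastic matrix `S`, and `Tr(ρ f(σ)) = Σᵢⱼ pᵢ Sᵢⱼ f(qⱼ)`. For a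
positive definite density matrix `σ` and `f = log`, Klein's inequality follows from concavity of
`log` along the rows of `S` and Gibbs' inequality. For `σ = h` and `f = id`, `Tr(ρ h)` is an average
of eigenvalues of `h`, each of modulus at most `‖h‖`, which gives the second bound.
-/

-- Under `Matrix.Norms.L2Operator`, `‖A‖` is `opNorm A` by definition.
open scoped Matrix.Norms.L2Operator MatrixOrder

theorem abs_dotProduct_mulVec_le {ι : Type*} [Fintype ι] [DecidableEq ι] {S : Matrix ι ι ℝ}
    (hS : S ∈ rowStochastic ℝ ι) {p : ι → ℝ} (hp : ∀ i, 0 ≤ p i) (hp1 : ∑ i, p i = 1)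
    {b : ι → ℝ} {C : ℝ} (hb : ∀ j, |b j| ≤ C) : |p ⬝ᵥ (S *ᵥ b)| ≤ C := by
  have hSb : ∀ i, |(S *ᵥ b) i| ≤ C := fun i => calc
    |(S *ᵥ b) i| ≤ ∑ j, S i j * |b j| := by
      refine (Finset.abs_sum_le_sum_abs _ _).trans_eq ?_
      simp [abs_mul, abs_of_nonneg (nonneg_of_mem_rowStochastic hS)]
    _ ≤ ∑ j, S i j * C := Finset.sum_le_sum fun j _ =>
      mul_le_mul_of_nonneg_left (hb j) (nonneg_of_mem_rowStochastic hS)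
    _ = C := by rw [← Finset.sum_mul, sum_row_of_mem_rowStochastic hS, one_mul]
  calc |p ⬝ᵥ (S *ᵥ b)| ≤ ∑ i, p i * |(S *ᵥ b) i| := by
        refine (Finset.abs_sum_le_sum_abs _ _).trans_eq ?_
        simp [abs_mul, abs_of_nonneg (hp _)]
    _ ≤ ∑ i, p i * C := Finset.sum_le_sum fun i _ => mul_le_mul_of_nonneg_left (hSb i) (hp i)
    _ = C := by rw [← Finset.sum_mul, hp1, one_mul]

theorem sum_mul_log_le_sum_mul_log {ι : Type*} [Fintype ι] {p r : ι → ℝ} (hp : ∀ i, 0 ≤ p i)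
    (hr : ∀ i, 0 < r i) (hrp : ∑ i, r i ≤ ∑ i, p i) :
    ∑ i, p i * Real.log (r i) ≤ ∑ i, p i * Real.log (p i) := by
  have hterm : ∀ i, p i * Real.log (r i) - p i * Real.log (p i) ≤ r i - p i := by
    intro i
    rcases (hp i).eq_or_lt with hpi | hpi
    · simp [← hpi, (hr i).le]
    have := Real.log_le_sub_one_of_pos (div_pos (hr i) hpi)
    rw [Real.log_div (hr i).ne' hpi.ne'] at this
    calc p i * Real.log (r i) - p i * Real.log (p i)
          = p i * (Real.log (r i) - Real.log (p i)) := by ring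
      _ ≤ p i * (r i / p i - 1) := mul_le_mul_of_nonneg_left this hpi.le
      _ = r i - p i := by rw [mul_sub, mul_div_cancel₀ _ hpi.ne', mul_one]
  have := Finset.sum_le_sum fun i (_ : i ∈ Finset.univ) => hterm i
  simp only [Finset.sum_sub_distrib] at this
  linarith

theorem dotProduct_mulVec_log_le {ι : Type*} [Fintype ι] [DecidableEq ι] {S : Matrix ι ι ℝ}
    (hS : S ∈ doublyStochastic ℝ ι) {p q : ι → ℝ} (hp : ∀ i, 0 ≤ p i) (hq : ∀ j, 0 < q j)
    (hqp : ∑ j, q j ≤ ∑ i, p i) : p ⬝ᵥ (S *ᵥ (Real.log ∘ q)) ≤ p ⬝ᵥ (Real.log ∘ p) := by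
  have hSq : ∀ i, 0 < (S *ᵥ q) i := by
    intro i
    obtain ⟨j, -, hj⟩ := Finset.exists_ne_zero_of_sum_ne_zero
      ((sum_row_of_mem_doublyStochastic hS i).trans_ne one_ne_zero)
    exact Finset.sum_pos' (fun j _ => mul_nonneg (nonneg_of_mem_doublyStochastic hS) (hq j).le)
      ⟨j, Finset.mem_univ _, mul_pos ((nonneg_of_mem_doublyStochastic hS).lt_of_ne' hj) (hq j)⟩
  have hJensen : ∀ i, (S *ᵥ (Real.log ∘ q)) i ≤ Real.log ((S *ᵥ q) i) := fun i => by
    simpa [mulVec, dotProduct] using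
      (strictConcaveOn_log_Ioi.concaveOn).le_map_sum (t := Finset.univ) (w := S i) (p := q)
        (fun j _ => nonneg_of_mem_doublyStochastic hS) (sum_row_of_mem_doublyStochastic hS i)
        (fun j _ => hq j)
  calc p ⬝ᵥ (S *ᵥ (Real.log ∘ q)) ≤ ∑ i, p i * Real.log ((S *ᵥ q) i) :=
        Finset.sum_le_sum fun i _ => mul_le_mul_of_nonneg_left (hJensen i) (hp i)
    _ ≤ p ⬝ᵥ (Real.log ∘ p) := sum_mul_log_le_sum_mul_log hp hSq
        ((sum_mulVec_of_mem_doublyStochastic hS).trans_le hqp)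

variable {k : Type*} [Fintype k] [DecidableEq k]

theorem sum_norm_sq_of_mem_unitaryGroup {W : Matrix k k ℂ} (hW : W ∈ unitaryGroup k ℂ)
    (i : k) : ∑ j, ‖W i j‖ ^ 2 = 1 := by
  have h1 : (W * Wᴴ) i i = 1 := by
    rw [← star_eq_conjTranspose, Unitary.mul_star_self_of_mem hW, one_apply_eq]
  have h2 : (W * Wᴴ) i i = ((∑ j, ‖W i j‖ ^ 2 : ℝ) : ℂ) := by
    simp [mul_apply, ← starRingEnd_apply, RCLike.mul_conj]
  exact_mod_cast h2.symm.trans h1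

theorem map_norm_sq_mem_doublyStochastic (W : unitaryGroup k ℂ) :
    (W : Matrix k k ℂ).map (‖·‖ ^ 2) ∈ doublyStochastic ℝ k := by
  refine mem_doublyStochastic_iff_sum.mpr
    ⟨fun i j => by simp, sum_norm_sq_of_mem_unitaryGroup W.2, fun j => ?_⟩
  simpa [star_apply] using sum_norm_sq_of_mem_unitaryGroup (star W).2 j

theorem trace_diagonal_mul_mul_diagonal_mul_conjTranspose (W : Matrix k k ℂ) (a b : k → ℝ) :
    (diagonal (fun i => (a i : ℂ)) * W * diagonal (fun i => (b i : ℂ)) * Wᴴ).trace =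
      ((a ⬝ᵥ W.map (‖·‖ ^ 2) *ᵥ b : ℝ) : ℂ) := by
  simp only [trace, diag, mul_apply, diagonal_apply, conjTranspose_apply, ite_mul, zero_mul,
    mul_ite, mul_zero, Finset.sum_ite_eq, Finset.sum_ite_eq', Finset.mem_univ, if_true,
    dotProduct, mulVec, map_apply, Complex.ofReal_sum, Complex.ofReal_mul, Finset.mul_sum]
  refine Finset.sum_congr rfl fun i _ => Finset.sum_congr rfl fun j _ => ?_
  rw [Complex.ofReal_pow, ← Complex.mul_conj', Complex.star_def]
  ring

theorem trace_mul_eq_dotProduct_mulVec {A B : Matrix k k ℂ} {U V : unitaryGroup k ℂ}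
    {a b : k → ℝ}
    (hA : A = (U : Matrix k k ℂ) * diagonal (fun i => (a i : ℂ)) * star (U : Matrix k k ℂ))
    (hB : B = (V : Matrix k k ℂ) * diagonal (fun i => (b i : ℂ)) * star (V : Matrix k k ℂ)) :
    (A * B).trace =
      ((a ⬝ᵥ ((star U * V : unitaryGroup k ℂ) : Matrix k k ℂ).map (‖·‖ ^ 2) *ᵥ b : ℝ) : ℂ) := by
  rw [hA, hB, ← trace_diagonal_mul_mul_diagonal_mul_conjTranspose, Submonoid.coe_mul,
    Unitary.coe_star, conjTranspose_mul, ← star_eq_conjTranspose, ← star_eq_conjTranspose,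
    star_star]
  simp only [Matrix.mul_assoc]
  rw [trace_mul_comm]
  simp only [Matrix.mul_assoc]

theorem _root_.Matrix.IsHermitian.eq_conj_diagonal {A : Matrix k k ℂ} (hA : A.IsHermitian) :
    A = (hA.eigenvectorUnitary : Matrix k k ℂ) * diagonal (fun i => (hA.eigenvalues i : ℂ)) *
      star (hA.eigenvectorUnitary : Matrix k k ℂ) :=
  hA.spectral_theorem

theorem matLog_eq_conj_diagonal {A : Matrix k k ℂ} (hA : A.IsHermitian) :
    matLog A = (hA.eigenvectorUnitary : Matrix k k ℂ) *
      diagonal (fun i => (Real.log (hA.eigenvalues i) : ℂ)) *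
        star (hA.eigenvectorUnitary : Matrix k k ℂ) :=
  dif_pos hA

theorem sum_eigenvalues_eq_one {A : Matrix k k ℂ} (hA : A.IsHermitian) (hA1 : A.trace = 1) :
    ∑ i, hA.eigenvalues i = 1 := by
  simpa using congrArg Complex.re (hA.trace_eq_sum_eigenvalues.symm.trans hA1)

theorem abs_eigenvalues_le_opNorm {A : Matrix k k ℂ} (hA : A.IsHermitian) (i : k) :
    |hA.eigenvalues i| ≤ opNorm A := by
  have : Nonempty k := ⟨i⟩
  have hmem : ((hA.eigenvalues i : ℝ) : ℂ) ∈ spectrum ℂ A := by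
    rw [hA.spectrum_eq_image_range]
    exact ⟨_, ⟨i, rfl⟩, rfl⟩
  have := spectrum.norm_le_norm_of_mem hmem
  rwa [Complex.norm_real, Real.norm_eq_abs] at this

theorem abs_re_trace_mul_le_opNorm {ρ A : Matrix k k ℂ} (hρ : IsDensityMatrix ρ)
    (hA : A.IsHermitian) : |(ρ * A).trace.re| ≤ opNorm A := by
  have hρH := hρ.1.isHermitian
  rw [trace_mul_eq_dotProduct_mulVec hρH.eq_conj_diagonal hA.eq_conj_diagonal,
    Complex.ofReal_re]
  exact abs_dotProduct_mulVec_le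
    (mem_doublyStochastic_iff_mem_rowStochastic_and_mem_colStochastic.mp
      (map_norm_sq_mem_doublyStochastic _)).1 hρ.1.eigenvalues_nonneg
    (sum_eigenvalues_eq_one hρH hρ.2) (abs_eigenvalues_le_opNorm hA)

theorem relEntropy_nonneg {ρ σ : Matrix k k ℂ} (hρ : IsDensityMatrix ρ) (hσ : σ.PosDef)
    (hσ1 : σ.trace = 1) : 0 ≤ relEntropy ρ σ := by
  have hρH := hρ.1.isHermitian
  have hself := trace_mul_eq_dotProduct_mulVec hρH.eq_conj_diagonal (matLog_eq_conj_diagonal hρH)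
  have hcross := trace_mul_eq_dotProduct_mulVec hρH.eq_conj_diagonal
    (matLog_eq_conj_diagonal hσ.isHermitian)
  rw [Unitary.star_mul_self, OneMemClass.coe_one, Matrix.map_one _ (by simp) (by simp),
    one_mulVec] at hself
  rw [relEntropy, mul_sub, trace_sub, hself, hcross, Complex.sub_re, Complex.ofReal_re,
    Complex.ofReal_re, sub_nonneg]
  exact dotProduct_mulVec_log_le (map_norm_sq_mem_doublyStochastic _) hρ.1.eigenvalues_nonneg
    hσ.eigenvalues_pos (by rw [sum_eigenvalues_eq_one _ hσ1, sum_eigenvalues_eq_one _ hρ.2])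

theorem matLog_eq_log {A : Matrix k k ℂ} (hA : A.IsHermitian) : matLog A = CFC.log A := by
  rw [CFC.log, hA.cfc_eq, IsHermitian.cfc, Unitary.conjStarAlgAut_apply,
    matLog_eq_conj_diagonal]
  rfl

theorem isHermitian_matLog (A : Matrix k k ℂ) : (matLog A).IsHermitian := by
  by_cases hA : A.IsHermitian
  · rw [matLog_eq_log hA]
    exact IsSelfAdjoint.log
  · simp [matLog, hermCalc, hA]

theorem matLog_exp {A : Matrix k k ℂ} (hA : A.IsHermitian) : matLog (NormedSpace.exp A) = A := by
  rw [matLog_eq_log (hA.isSelfAdjoint.exp), CFC.log_exp A hA.isSelfAdjoint]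

theorem posDef_exp {A : Matrix k k ℂ} (hA : A.IsHermitian) : (NormedSpace.exp A).PosDef :=
  ((isUnit_exp A).isStrictlyPositive hA.isSelfAdjoint.exp_nonneg).posDef

theorem matLog_trace_inv_smul [Nonempty k] {M : Matrix k k ℂ} (hM : M.PosDef) :
    matLog (M.trace⁻¹ • M) = matLog M - algebraMap ℝ (Matrix k k ℂ) (Real.log M.trace.re) := by
  obtain ⟨hre, him⟩ := Complex.pos_iff.mp hM.trace_pos
  have hsmul : M.trace⁻¹ • M = M.trace.re⁻¹ • M := by
    conv_lhs => rw [← Complex.re_add_im M.trace, ← him]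
    rw [Complex.ofReal_zero, zero_mul, add_zero, ← Complex.ofReal_inv, Complex.coe_smul]
  rw [hsmul, matLog_eq_log, matLog_eq_log hM.isHermitian,
    CFC.log_smul' M (inv_pos.mpr hre) hM.isStrictlyPositive, Real.log_inv, map_neg]
  · abel
  · exact hM.isHermitian.smul (.all _)

theorem re_trace_mul_algebraMap (X : Matrix k k ℂ) (c : ℝ) :
    (X * algebraMap ℝ (Matrix k k ℂ) c).trace.re = c * X.trace.re := by
  rw [Algebra.algebraMap_eq_smul_one, mul_smul_comm, mul_one, trace_smul, Complex.smul_re,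
    smul_eq_mul]

theorem relEntropy_eq_of_matLog_eq {ρ σ A : Matrix k k ℂ} {c : ℝ}
    (hlog : matLog σ = matLog ρ + A - algebraMap ℝ (Matrix k k ℂ) c) :
    relEntropy σ ρ = (σ * A).trace.re - c * σ.trace.re := by
  rw [relEntropy, hlog,
    show matLog ρ + A - algebraMap ℝ _ c - matLog ρ = A - algebraMap ℝ _ c by abel,
    mul_sub, trace_sub, Complex.sub_re, re_trace_mul_algebraMap]

theorem relEntropy_swap_eq_of_matLog_eq {ρ σ A : Matrix k k ℂ} {c : ℝ}
    (hlog : matLog σ = matLog ρ + A - algebraMap ℝ (Matrix k k ℂ) c) :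
    relEntropy ρ σ = c * ρ.trace.re - (ρ * A).trace.re := by
  rw [relEntropy, hlog,
    show matLog ρ - (matLog ρ + A - algebraMap ℝ _ c) = algebraMap ℝ _ c - A by abel,
    mul_sub, trace_sub, Complex.sub_re, re_trace_mul_algebraMap]

/-- relative entropy bound for perturbed states, first direction. -/
theorem relEntropy_pert_left {n : ℕ}
    (D : Matrix (Fin n) (Fin n) ℂ) (hD : D.PosDef) (hDtr : D.trace = 1)
    (h : Matrix (Fin n) (Fin n) ℂ) (hh : h.IsHermitian) :
    relEntropy (pert D h) D ≤ ((pert D h * h).trace).re - ((D * h).trace).re ∧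
    ((pert D h * h).trace).re - ((D * h).trace).re ≤ 2 * opNorm h := by
  have : Nonempty (Fin n) :=
    Finset.univ_nonempty_iff.mp (Finset.nonempty_of_sum_ne_zero (hDtr ▸ one_ne_zero))
  have hA : (matLog D + h).IsHermitian := (isHermitian_matLog D).add hh
  have hE := posDef_exp hA
  have hσ : (pert D h).PosDef := hE.smul (inv_pos.mpr hE.trace_pos)
  have hσ1 : (pert D h).trace = 1 := by
    rw [pert, trace_smul, smul_eq_mul, inv_mul_cancel₀ hE.trace_pos.ne']
  have hlog : matLog (pert D h) = matLog D + h -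
      algebraMap ℝ _ (Real.log (NormedSpace.exp (matLog D + h)).trace.re) := by
    rw [pert, matLog_trace_inv_smul hE, matLog_exp hA]
  have hKlein := relEntropy_nonneg ⟨hD.posSemidef, hDtr⟩ hσ hσ1
  have hσh := abs_re_trace_mul_le_opNorm ⟨hσ.posSemidef, hσ1⟩ hh
  have hDh := abs_re_trace_mul_le_opNorm ⟨hD.posSemidef, hDtr⟩ hh
  rw [relEntropy_eq_of_matLog_eq hlog, hσ1]
  rw [relEntropy_swap_eq_of_matLog_eq hlog, hDtr] at hKlein
  simp only [Complex.one_re, mul_one] at hKlein ⊢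
  constructor
  · linarith
  · linarith [abs_le.mp hσh, abs_le.mp hDh]

end TAL
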